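/- Let f be defined by f(-1)=0, f(0)=1, f(n) = (-1)^(n-1)·b·f(n-1) + a²·f(n-2). With a = i·√2 and b = 1, for every k ≥ 0: if k ≡ 0 or 1 (mod 4) then f(k) = J(k+1), and if k ≡ 2 or 3 (mod 4) then f(k) = -J(k+1), where J denotes the Jacobsthal sequence. -/
import Mathlib

/-- The Jacobsthal sequence: `J 0 = 0`, `J 1 = 1`, `J (n+2) = J (n+1) + 2 * J n`
(so `J 1 = J 2 = 1`). -/
def jacobsthal : ℕ → ℕ
  | 0 => 0
  | 1 => 1
  | (n + 2) => jacobsthal (n + 1) + 2 * jacobsthal n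

lemma jac_rec (n : ℕ) : jacobsthal (n+2) = jacobsthal (n+1) + 2 * jacobsthal n := rfl

/-- With `a = i√2`, `b = 1`: if `f : ℤ → ℂ` satisfies `f (-1) = 0`, `f 0 = 1` and
`f n = (-1)^(n-1) * b * f (n-1) + a^2 * f (n-2)` for `n ≥ 1`, then for every `k ≥ 0`,
`f k = J (k+1)` when `k ≡ 0, 1 (mod 4)` and `f k = -J (k+1)` when `k ≡ 2, 3 (mod 4)`,
where `J` is the Jacobsthal sequence. -/
theorem stmt3 (f : ℤ → ℂ)
    (hf1 : f (-1) = 0) (hf0 : f 0 = 1)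
    (hf : ∀ n : ℤ, 1 ≤ n →
      f n = (-1 : ℂ) ^ (n - 1).toNat * 1 * f (n - 1)
        + (Complex.I * (Real.sqrt 2 : ℂ)) ^ 2 * f (n - 2)) :
    ∀ k : ℕ,
      ((k % 4 = 0 ∨ k % 4 = 1) → f k = (jacobsthal (k + 1) : ℂ)) ∧
      ((k % 4 = 2 ∨ k % 4 = 3) → f k = -(jacobsthal (k + 1) : ℂ)) := by
  have ha : (Complex.I * (Real.sqrt 2 : ℂ)) ^ 2 = -2 := by
    rw [mul_pow, Complex.I_sq]
    norm_cast
    rw [Real.sq_sqrt (by norm_num : (0:ℝ) ≤ 2)]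
    norm_num
  have key : ∀ k : ℕ,
      f k = (if k % 4 < 2 then (1:ℂ) else -1) * jacobsthal (k+1) ∧
      f (k+1) = (if (k+1) % 4 < 2 then (1:ℂ) else -1) * jacobsthal (k+2) := by
    intro k
    induction k with
    | zero =>
      constructor
      · simpa [jacobsthal] using hf0
      · have h := hf 1 le_rfl
        simp only [ha] at h
        norm_num at h
        rw [hf0, hf1] at h
        simpa [jacobsthal] using h
    | succ n ih =>
      refine ⟨ih.2, ?_⟩
      have h := hf ((n:ℤ)+2) (by omega)
      have e1 : (n:ℤ)+2-1 = ((n+1:ℕ):ℤ) := by push_cast; ring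
      have e2 : (n:ℤ)+2-2 = ((n:ℕ):ℤ) := by push_cast; ring
      rw [ha, e1, e2, Int.toNat_natCast] at h
      push_cast at h
      rw [ih.1, ih.2] at h
      have e3 : ((n+1:ℕ):ℤ)+1 = (n:ℤ)+2 := by push_cast; ring
      rw [e3, h, jac_rec (n+1)]
      have h4 : n % 4 = 0 ∨ n % 4 = 1 ∨ n % 4 = 2 ∨ n % 4 = 3 := by omega
      rcases h4 with h4 | h4 | h4 | h4
      all_goals (
        have h1 : (n+1) % 4 = (n%4) + 1 % 4 ∨ True := Or.inr trivial
        first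
        | (have he : Even n := Nat.even_iff.mpr (by omega)
           have hp : (-1:ℂ)^(n+1) = -1 := (he.add_one).neg_one_pow)
        | (have ho : Odd n := Nat.odd_iff.mpr (by omega)
           have hp : (-1:ℂ)^(n+1) = 1 := (ho.add_one).neg_one_pow))
      all_goals (
        have hn1 : (n+1) % 4 = (n % 4 + 1) % 4 := by omega
        have hn2 : (n+2) % 4 = (n % 4 + 2) % 4 := by omega
        rw [hp]
        simp only [h4, hn1, hn2]
        norm_num
        try (push_cast; ring))
  intro k
  have hk := (key k).1
  constructor
  · intro h
    have : k % 4 < 2 := by omega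
    simpa [this] using hk
  · intro h
    have : ¬ (k % 4 < 2) := by omega
    simp [this] at hk
    simpa using hk
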